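/- arXiv:1905.10758 — 6 statements merged into one kernel-verified Lean document; each statement's English description precedes it below -/
import Mathlib

section
/- If α := P(Z₁ = Z₂) > 0 for i.i.d. copies Z₁, Z₂ of the payoff distribution, then P(W_N ≥ 1) ≤ (2β)^N with 2β = 1 - α < 1, where W_N is the number of strict pure Nash equilibria; hence the probability that the game has a strict pure Nash equilibrium tends to 0 geometrically fast as N → ∞, and is summable over N. -/
open MeasureTheory ProbabilityTheory
open scoped Classical

/-- If `α = P(Z₁ = Z₂) > 0`, then by Markov's inequality the probability that the game has
at least one strict pure Nash equilibrium is at most `(2β)^N = (1-α)^N < 1`, a bound which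
tends to `0` geometrically fast and is summable over `N`. -/
theorem prob_exists_strictPNE_le (Ω : Type*) [MeasurableSpace Ω] (μ : Measure Ω)
    [IsProbabilityMeasure μ] (N : ℕ)
    (Z : (Fin N × (Fin N → Bool)) → Ω → ℝ)
    (hmeas : ∀ p, Measurable (Z p))
    (hindep : iIndepFun Z μ)
    (hident : ∀ p q, IdentDistrib (Z p) (Z q) μ μ)
    (α β : ℝ) (hα0 : 0 < α) (hα1 : α ≤ 1) (hβα : β = (1 - α) / 2)
    (hαZ : ∀ p q, p ≠ q → μ {ω | Z p ω = Z q ω} = ENNReal.ofReal α)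
    (hβZ : ∀ p q, p ≠ q → μ {ω | Z p ω < Z q ω} = ENNReal.ofReal β)
    (W : Ω → ℕ)
    (hW : ∀ ω, W ω = (Finset.univ.filter
      (fun s : Fin N → Bool =>
        ∀ i : Fin N, Z (i, Function.update s i (!s i)) ω < Z (i, s) ω)).card) :
    μ {ω | 1 ≤ W ω} ≤ ENNReal.ofReal ((2 * β) ^ N) ∧
      (2 * β) ^ N = (1 - α) ^ N ∧
      Summable (fun n : ℕ => (1 - α) ^ n) := by
  have hβ0 : 0 ≤ β := by rw [hβα]; linarith
  set B : (Fin N → Bool) → Fin N → Set Ω :=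
    fun s i => {ω | Z (i, Function.update s i (!s i)) ω < Z (i, s) ω} with hB
  have hupd : ∀ (s : Fin N → Bool) (i : Fin N), Function.update s i (!s i) ≠ s := by
    intro s i h
    have := congrFun h i
    simp at this
  have hne : ∀ (s : Fin N → Bool) (i : Fin N),
      ((i, Function.update s i (!s i)) : Fin N × (Fin N → Bool)) ≠ (i, s) := by
    intro s i h
    exact hupd s i (congrArg Prod.snd h)
  have hBmeas : ∀ s i, MeasurableSet (B s i) :=
    fun s i => measurableSet_lt (hmeas _) (hmeas _)
  have hBμ : ∀ s i, μ (B s i) = ENNReal.ofReal β := fun s i => hβZ _ _ (hne s i)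
  -- factorization by independence
  have hfact : ∀ (s : Fin N → Bool) (F : Finset (Fin N)),
      μ (⋂ i ∈ F, B s i) = ∏ i ∈ F, μ (B s i) := by
    intro s F
    induction F using Finset.induction_on with
    | empty => simp
    | insert _ _ ha ih =>
      rename_i a F
      set S : Finset (Fin N × (Fin N → Bool)) := ({a} : Finset (Fin N)) ×ˢ Finset.univ with hS
      set T : Finset (Fin N × (Fin N → Bool)) := F ×ˢ Finset.univ with hT
      have hST : Disjoint S T := by
        rw [Finset.disjoint_left]
        intro p hp hp'
        rw [hS, Finset.mem_product, Finset.mem_singleton] at hp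
        rw [hT, Finset.mem_product] at hp'
        exact ha (hp.1 ▸ hp'.1)
      have hIF := hindep.indepFun_finset S T hST hmeas
      have hmemS : ∀ t : Fin N → Bool, ((a, t) : Fin N × (Fin N → Bool)) ∈ S := by
        intro t; rw [hS, Finset.mem_product]; simp
      have hmemT : ∀ (i : Fin N), i ∈ F → ∀ t : Fin N → Bool,
          ((i, t) : Fin N × (Fin N → Bool)) ∈ T := by
        intro i hi t; rw [hT, Finset.mem_product]; simp [hi]
      have hsA : MeasurableSet[(MeasurableSpace.pi).comap
          (fun ω (p : S) => Z p ω)] (B s a) := by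
        refine ⟨{x : S → ℝ | x ⟨(a, Function.update s a (!s a)), hmemS _⟩ < x ⟨(a, s), hmemS _⟩},
          measurableSet_lt (measurable_pi_apply _) (measurable_pi_apply _), rfl⟩
      have hsB : MeasurableSet[(MeasurableSpace.pi).comap
          (fun ω (p : T) => Z p ω)] (⋂ i ∈ F, B s i) := by
        refine ⟨⋂ i, ⋂ (h : i ∈ F),
          {x : T → ℝ | x ⟨(i, Function.update s i (!s i)), hmemT i h _⟩ < x ⟨(i, s), hmemT i h _⟩},
          MeasurableSet.iInter fun i => MeasurableSet.iInter fun h =>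
            measurableSet_lt (measurable_pi_apply _) (measurable_pi_apply _), ?_⟩
        ext ω
        simp [Set.mem_iInter, hB]
      have hinter := hIF.meas_inter hsA hsB
      rw [Finset.set_biInter_insert, Finset.prod_insert ha, hinter, ih]
  -- the union bound
  have hsub : {ω | 1 ≤ W ω} ⊆ ⋃ s : Fin N → Bool, ⋂ i ∈ Finset.univ, B s i := by
    intro ω hω
    have h1 : 1 ≤ W ω := hω
    rw [hW ω] at h1
    obtain ⟨s, hs⟩ := Finset.card_pos.mp h1
    rw [Finset.mem_filter] at hs
    exact Set.mem_iUnion.mpr ⟨s, Set.mem_iInter₂.mpr fun i _ => hs.2 i⟩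
  have hmain : μ {ω | 1 ≤ W ω} ≤ ENNReal.ofReal ((2 * β) ^ N) := by
    calc μ {ω | 1 ≤ W ω} ≤ μ (⋃ s : Fin N → Bool, ⋂ i ∈ Finset.univ, B s i) :=
          measure_mono hsub
      _ ≤ ∑' s : Fin N → Bool, μ (⋂ i ∈ Finset.univ, B s i) := measure_iUnion_le _
      _ = ∑ s : Fin N → Bool, μ (⋂ i ∈ Finset.univ, B s i) := tsum_fintype _
      _ = ∑ s : Fin N → Bool, ∏ i ∈ Finset.univ, μ (B s i) := by
          refine Finset.sum_congr rfl fun s _ => hfact s _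
      _ = ∑ _s : Fin N → Bool, (ENNReal.ofReal β) ^ N := by
          refine Finset.sum_congr rfl fun s _ => ?_
          simp [hBμ s]
      _ = (2 : ENNReal) ^ N * (ENNReal.ofReal β) ^ N := by
          rw [Finset.sum_const]
          simp [Fintype.card_fun, mul_comm]
      _ = ENNReal.ofReal ((2 * β) ^ N) := by
          rw [mul_pow, ENNReal.ofReal_mul (by positivity), ENNReal.ofReal_pow hβ0,
            ENNReal.ofReal_pow (by norm_num)]
          norm_num
  refine ⟨hmain, by rw [hβα]; ring, ?_⟩
  exact summable_geometric_of_lt_one (by linarith) (by linarith)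
end

section
/- The expected number of pure Nash equilibria in an N-player binary-action game with i.i.d. payoffs equals 2^N (1 - β)^N = (1 + α)^N, where α = P(Z₁ = Z₂) and β = (1-α)/2. -/
/-!
Count equilibria as `∑ s, 1{s is a PNE}`. A profile `s` is a PNE iff for every player `i` the
payoff `Z (i, s)` is at least the payoff of `i`'s unilateral deviation; these `N` events involve
pairwise disjoint pairs of payoffs, hence are independent, and each has probability
`P(Z₁ < Z₂) + P(Z₁ = Z₂) = (1 + α) / 2`. Summing `((1 + α) / 2) ^ N` over the `2 ^ N` profiles
gives `(1 + α) ^ N`.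
-/

open MeasureTheory ProbabilityTheory Function

namespace ProbabilityTheory

variable {Ω ι κ β : Type*} [MeasurableSpace Ω] {μ : Measure Ω} [MeasurableSpace β]

theorem iIndepFun.iIndepFun_finset_blocks {f : κ → Ω → β} (hf : iIndepFun f μ)
    (hmeas : ∀ k, Measurable (f k)) {S : ι → Finset κ} (hS : Pairwise (Disjoint on S)) :
    iIndepFun (fun i ω (k : S i) ↦ f k ω) μ := by
  classical
  have := hf.isProbabilityMeasure
  rw [iIndepFun_iff_measure_inter_preimage_eq_mul]
  intro t sets hsets
  induction t using Finset.induction_on with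
  | empty => simp
  | @insert j t hj ih =>
    rw [Finset.set_biInter_insert, Finset.prod_insert hj,
      ← ih fun i hi ↦ hsets i (Finset.mem_insert_of_mem hi)]
    have hdisj : Disjoint (S j) (t.biUnion S) :=
      (Finset.disjoint_biUnion_right _ _ _).2 fun i hi ↦ hS fun h ↦ hj (h ▸ hi)
    let C : Set (t.biUnion S → β) := ⋂ i : t,
      (fun x (k : S i) ↦ x ⟨k, Finset.mem_biUnion.2 ⟨i, i.2, k.2⟩⟩) ⁻¹' sets i
    have hC : MeasurableSet C := .iInter fun i ↦
      (hsets i (Finset.mem_insert_of_mem i.2)).preimage (by fun_prop)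
    have hCpre : (fun ω (k : t.biUnion S) ↦ f k ω) ⁻¹' C
        = ⋂ i ∈ t, (fun ω (k : S i) ↦ f k ω) ⁻¹' sets i := by
      ext; simp [C]
    rw [← hCpre]
    exact (hf.indepFun_finset _ _ hdisj hmeas).measure_inter_preimage_eq_mul _ C
      (hsets j (Finset.mem_insert_self j t)) hC

theorem iIndepFun.measure_iInter_le_eq_prod [Fintype ι] [DecidableEq κ] {f : κ → Ω → ℝ}
    (hf : iIndepFun f μ) (hmeas : ∀ k, Measurable (f k)) {p q : ι → κ}
    (hpq : Pairwise (Disjoint on fun i ↦ ({p i, q i} : Finset κ))) :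
    μ (⋂ i, {ω | f (p i) ω ≤ f (q i) ω}) = ∏ i, μ {ω | f (p i) ω ≤ f (q i) ω} :=
  (hf.iIndepFun_finset_blocks hmeas hpq).meas_iInter fun i ↦
    ⟨{x | x ⟨p i, by simp⟩ ≤ x ⟨q i, by simp⟩}, measurableSet_le (by fun_prop) (by fun_prop), rfl⟩

end ProbabilityTheory

namespace MeasureTheory

variable {Ω ι : Type*} [MeasurableSpace Ω] {μ : Measure Ω}

theorem integral_card_filter [Fintype ι] [IsFiniteMeasure μ] {P : Ω → ι → Prop}
    [∀ ω, DecidablePred (P ω)] (hP : ∀ i, MeasurableSet {ω | P ω i}) :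
    ∫ ω, ((Finset.univ.filter (P ω)).card : ℝ) ∂μ = ∑ i, μ.real {ω | P ω i} := by
  have hcount : ∀ ω, ((Finset.univ.filter (P ω)).card : ℝ)
      = ∑ i, {ω | P ω i}.indicator 1 ω := fun ω ↦ by
    simp only [Finset.natCast_card_filter, Set.indicator_apply, Set.mem_ofPred_eq, Pi.one_apply]
  simp_rw [hcount]
  rw [integral_finsetSum _ fun i _ ↦ (integrable_const 1).indicator (hP i)]
  simp_rw [integral_indicator_one (hP _)]

theorem measure_le_eq_measure_lt_add_measure_eq {X Y : Ω → ℝ} (hX : Measurable X)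
    (hY : Measurable Y) :
    μ {ω | X ω ≤ Y ω} = μ {ω | X ω < Y ω} + μ {ω | X ω = Y ω} := by
  simp_rw [le_iff_lt_or_eq, Set.ofPred_or]
  exact measure_union (Set.disjoint_left.2 fun _ h₁ h₂ ↦ h₁.ne h₂)
    (measurableSet_eq_fun hX hY)

theorem measureReal_le_eq_of_measure_eq_of_measure_lt [IsProbabilityMeasure μ] {X Y : Ω → ℝ}
    (hX : Measurable X) (hY : Measurable Y) {a : ℝ}
    (heq : μ {ω | X ω = Y ω} = ENNReal.ofReal a)
    (hXY : μ {ω | X ω < Y ω} = ENNReal.ofReal ((1 - a) / 2))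
    (hYX : μ {ω | Y ω < X ω} = ENNReal.ofReal ((1 - a) / 2)) :
    μ.real {ω | X ω ≤ Y ω} = (1 + a) / 2 := by
  have hle := measure_le_eq_measure_lt_add_measure_eq (μ := μ) hX hY
  have htotal : μ {ω | X ω ≤ Y ω} + μ {ω | Y ω < X ω} = 1 := by
    have := prob_add_prob_compl (μ := μ) (measurableSet_le hX hY)
    simpa only [Set.compl_ofPred, not_le] using this
  rw [hle, hXY, heq, hYX] at htotal
  -- `ENNReal.ofReal` truncates at `0`; the total mass `1` forces `0 ≤ a ≤ 1`.
  have h := congrArg ENNReal.toReal htotal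
  rw [ENNReal.toReal_add (by finiteness) (by finiteness),
    ENNReal.toReal_add (by finiteness) (by finiteness)] at h
  simp only [ENNReal.toReal_ofReal', ENNReal.toReal_one] at h
  have ha : 0 ≤ a ∧ a ≤ 1 := by
    constructor <;> by_contra! hlt
    · rw [max_eq_left (by linarith), max_eq_right hlt.le] at h
      linarith
    · rw [max_eq_right (by linarith), max_eq_left (by linarith)] at h
      linarith
  rw [measureReal_def, hle, hXY, heq, ← ENNReal.ofReal_add (by linarith) ha.1,
    ENNReal.toReal_ofReal (by linarith)]
  ring

end MeasureTheory

open scoped Classical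

theorem expected_number_PNE_general (Ω : Type*) [MeasurableSpace Ω] (μ : Measure Ω)
    [IsProbabilityMeasure μ] (N : ℕ)
    (Z : (Fin N × (Fin N → Bool)) → Ω → ℝ)
    (hmeas : ∀ p, Measurable (Z p))
    (hindep : iIndepFun Z μ)
    (α β : ℝ) (hβα : β = (1 - α) / 2)
    (hαZ : ∀ p q, p ≠ q → μ {ω | Z p ω = Z q ω} = ENNReal.ofReal α)
    (hβZ : ∀ p q, p ≠ q → μ {ω | Z p ω < Z q ω} = ENNReal.ofReal β)
    (card𝒩 : Ω → ℕ)
    (hcard : ∀ ω, card𝒩 ω = (Finset.univ.filter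
      (fun s : Fin N → Bool =>
        ∀ i : Fin N, Z (i, Function.update s i (!s i)) ω ≤ Z (i, s) ω)).card) :
    ∫ ω, (card𝒩 ω : ℝ) ∂μ = (1 + α) ^ N ∧
      ((1 : ℝ) + α) ^ N = 2 ^ N * (1 - β) ^ N := by
  subst hβα
  have hdev_ne (s : Fin N → Bool) (i : Fin N) : (i, update s i (!s i)) ≠ (i, s) :=
    fun h ↦ by simpa using congrFun (congrArg Prod.snd h) i
  have hdisj (s : Fin N → Bool) :
      Pairwise (Disjoint on fun i ↦ ({(i, update s i (!s i)), (i, s)} : Finset _)) :=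
    fun i j hij ↦ by simp [Finset.disjoint_left, hij]
  have hdev (s : Fin N → Bool) (i : Fin N) :
      μ.real {ω | Z (i, update s i (!s i)) ω ≤ Z (i, s) ω} = (1 + α) / 2 :=
    measureReal_le_eq_of_measure_eq_of_measure_lt (hmeas _) (hmeas _) (hαZ _ _ (hdev_ne s i))
      (hβZ _ _ (hdev_ne s i)) (hβZ _ _ (hdev_ne s i).symm)
  have hPNE (s : Fin N → Bool) :
      μ.real {ω | ∀ i, Z (i, update s i (!s i)) ω ≤ Z (i, s) ω} = ((1 + α) / 2) ^ N := by
    simp_rw [measureReal_def, ← Set.iInter_ofPred,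
      hindep.measure_iInter_le_eq_prod hmeas (hdisj s), ENNReal.toReal_prod, ← measureReal_def,
      hdev, Finset.prod_const, Finset.card_univ, Fintype.card_fin]
  refine ⟨?_, by rw [← mul_pow]; ring_nf⟩
  simp_rw [hcard]
  rw [integral_card_filter fun s ↦ ?_]
  · simp_rw [hPNE, Finset.sum_const, Finset.card_univ, Fintype.card_fun, Fintype.card_bool,
      Fintype.card_fin, nsmul_eq_mul, Nat.cast_pow, Nat.cast_ofNat, ← mul_pow]
    rw [mul_div_cancel₀ _ two_ne_zero]
  · simp_rw [← Set.iInter_ofPred]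
    exact .iInter fun i ↦ measurableSet_le (hmeas _) (hmeas _)

/-- The expected number of pure Nash equilibria equals
`2^N (1-β)^N = (1+α)^N`, where `α = P(Z₁ = Z₂)` and `β = (1-α)/2`. -/
theorem expected_number_PNE (Ω : Type*) [MeasurableSpace Ω] (μ : Measure Ω)
    [IsProbabilityMeasure μ] (N : ℕ)
    (Z : (Fin N × (Fin N → Bool)) → Ω → ℝ)
    (hmeas : ∀ p, Measurable (Z p))
    (hindep : iIndepFun Z μ)
    (hident : ∀ p q, IdentDistrib (Z p) (Z q) μ μ)
    (α β : ℝ) (hβα : β = (1 - α) / 2)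
    (hαZ : ∀ p q, p ≠ q → μ {ω | Z p ω = Z q ω} = ENNReal.ofReal α)
    (hβZ : ∀ p q, p ≠ q → μ {ω | Z p ω < Z q ω} = ENNReal.ofReal β)
    (card𝒩 : Ω → ℕ)
    (hcard : ∀ ω, card𝒩 ω = (Finset.univ.filter
      (fun s : Fin N → Bool =>
        ∀ i : Fin N, Z (i, Function.update s i (!s i)) ω ≤ Z (i, s) ω)).card) :
    ∫ ω, (card𝒩 ω : ℝ) ∂μ = (1 + α) ^ N ∧
      ((1 : ℝ) + α) ^ N = 2 ^ N * (1 - β) ^ N :=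
  expected_number_PNE_general Ω μ N Z hmeas hindep α β hβα hαZ hβZ card𝒩 hcard
end

section
/- For two action profiles s, t at Hamming distance at least 2 in the binary hypercube, the indicator random variables 1{s is a pure Nash equilibrium} and 1{t is a pure Nash equilibrium} are independent. -/
open MeasureTheory ProbabilityTheory
open scoped Classical

/-! Whether `s` is a pure Nash equilibrium is a measurable function of the payoffs `Z_i^u` with
`u` equal to `s` off player `i`. When `s` and `t` are at Hamming distance at least 2, no profile
agrees with both `s` and `t` off a single player, so the two families of payoffs are disjoint
and hence independent. -/

theorem hammingDist_le_one_of_eq_of_ne {ι : Type*} [Fintype ι] {β : ι → Type*}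
    [∀ i, DecidableEq (β i)] {s t : ∀ i, β i} (i : ι) (h : ∀ j ≠ i, s j = t j) :
    hammingDist s t ≤ 1 :=
  Finset.card_le_one.2 fun j hj k hk => by
    simp only [Finset.mem_filter, Finset.mem_univ, true_and] at hj hk
    exact (not_imp_comm.1 (h j) hj).trans (not_imp_comm.1 (h k) hk).symm

section NashSupport

variable {ι α : Type*} [Fintype ι] [DecidableEq ι] [Fintype α]

noncomputable def nashSupport (s : ι → α) : Finset (ι × (ι → α)) :=
  {p | ∀ j ≠ p.1, p.2 j = s j}

theorem mem_nashSupport {s : ι → α} {p : ι × (ι → α)} :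
    p ∈ nashSupport s ↔ ∀ j ≠ p.1, p.2 j = s j := by
  simp [nashSupport]

theorem mk_update_mem_nashSupport (s : ι → α) (i : ι) (a : α) :
    (i, Function.update s i a) ∈ nashSupport s :=
  mem_nashSupport.2 fun _ hj => Function.update_of_ne hj _ _

theorem mk_mem_nashSupport (s : ι → α) (i : ι) : (i, s) ∈ nashSupport s :=
  mem_nashSupport.2 fun _ _ => rfl

theorem disjoint_nashSupport [DecidableEq α] {s t : ι → α} (h : 2 ≤ hammingDist s t) :
    Disjoint (nashSupport s) (nashSupport t) := by
  refine Finset.disjoint_left.2 fun p hs ht => ?_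
  have := hammingDist_le_one_of_eq_of_ne p.1 fun j hj =>
    (mem_nashSupport.1 hs j hj).symm.trans (mem_nashSupport.1 ht j hj)
  omega

end NashSupport

section PNEIndicator

variable {ι : Type*} [Fintype ι] [DecidableEq ι]

noncomputable def pneIndicator (s : ι → Bool) (g : nashSupport s → ℝ) : ℝ :=
  if ∀ i, g ⟨_, mk_update_mem_nashSupport s i (!s i)⟩ ≤ g ⟨_, mk_mem_nashSupport s i⟩ then 1
  else 0

theorem measurable_pneIndicator (s : ι → Bool) : Measurable (pneIndicator s) :=
  Measurable.ite (measurableSet_setOfPred.2 <| Measurable.forall fun _ =>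
      measurableSet_setOfPred.1 <| measurableSet_le (measurable_pi_apply _) (measurable_pi_apply _))
    measurable_const measurable_const

end PNEIndicator

theorem indep_PNE_indicators_of_hammingDist_ge_two_general (Ω : Type*) [MeasurableSpace Ω]
    (μ : Measure Ω) (N : ℕ)
    (Z : (Fin N × (Fin N → Bool)) → Ω → ℝ)
    (hmeas : ∀ p, Measurable (Z p))
    (hindep : iIndepFun Z μ)
    (s t : Fin N → Bool) (hdist : 2 ≤ hammingDist s t) :
    IndepFun
      (fun ω => if ∀ i : Fin N, Z (i, Function.update s i (!s i)) ω ≤ Z (i, s) ω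
        then (1 : ℝ) else 0)
      (fun ω => if ∀ i : Fin N, Z (i, Function.update t i (!t i)) ω ≤ Z (i, t) ω
        then (1 : ℝ) else 0) μ := by
  have hsupports := (hindep.indepFun_finset _ _ (disjoint_nashSupport hdist) hmeas).comp
    (measurable_pneIndicator s) (measurable_pneIndicator t)
  -- the two sides differ only in the `Decidable` instance of `∀ i : Fin N, _`
  convert hsupports using 1
    <;> exact funext fun _ => by simp only [Function.comp_apply, pneIndicator]; congr

/-- For two action profiles at Hamming distance at least 2, the indicator random variables
of the events "is a pure Nash equilibrium" are independent. -/
theorem indep_PNE_indicators_of_hammingDist_ge_two (Ω : Type*) [MeasurableSpace Ω]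
    (μ : Measure Ω) [IsProbabilityMeasure μ] (N : ℕ)
    (Z : (Fin N × (Fin N → Bool)) → Ω → ℝ)
    (hmeas : ∀ p, Measurable (Z p))
    (hindep : iIndepFun Z μ)
    (hident : ∀ p q, IdentDistrib (Z p) (Z q) μ μ)
    (s t : Fin N → Bool) (hdist : 2 ≤ hammingDist s t) :
    IndepFun
      (fun ω => if ∀ i : Fin N, Z (i, Function.update s i (!s i)) ω ≤ Z (i, s) ω
        then (1 : ℝ) else 0)
      (fun ω => if ∀ i : Fin N, Z (i, Function.update t i (!t i)) ω ≤ Z (i, t) ω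
        then (1 : ℝ) else 0) μ :=
  indep_PNE_indicators_of_hammingDist_ge_two_general Ω μ N Z hmeas hindep s t hdist
end

section
/- The variance of the number of pure Nash equilibria in the random N-player binary game is τ_N² = 2^N b_N + 2^N N (α(1-β)^{2N-2} − (1-β)^{2N}), where b_N = (1-β)^N(1 − (1-β)^N). -/
/-!
The count is `∑ₛ 1_{Eₛ}`, where `Eₛ` is the event that the profile `s` is a pure Nash equilibrium,
so its variance is `∑ₛ ∑ₜ cov(1_{Eₛ}, 1_{Eₜ})`. The event `Eₛ ∩ Eₜ` is an intersection over the
players `i` of events that only involve the payoffs `Z (i, ·)`, which are independent across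
players; player `i` contributes the factor `1 - β` if `t = s`, `α` if `t` is `s` with player `i`'s
strategy flipped (the two comparisons then force a tie), and `(1 - β)²` otherwise. So the
covariance is `b` on the diagonal, `α (1 - β)^(2N-2) - (1 - β)^(2N)` between neighbours in the
hypercube and `0` for all other pairs.
-/

open MeasureTheory ProbabilityTheory

namespace ProbabilityTheory

variable {Ω ι κ 𝓧 : Type*} {mΩ : MeasurableSpace Ω} [MeasurableSpace 𝓧] {μ : Measure Ω}

lemma iIndepFun.curry {X : ι × κ → Ω → 𝓧} (mX : ∀ p, Measurable (X p)) (h : iIndepFun X μ) :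
    iIndepFun (fun i ω j ↦ X (i, j) ω) μ := by
  have := h.isProbabilityMeasure
  have (p : ι × κ) : IsProbabilityMeasure (μ.map (X p)) :=
    Measure.isProbabilityMeasure_map (mX p).aemeasurable
  rw [iIndepFun_iff_map_fun_eq_infinitePi_map fun i ↦ by fun_prop]
  have hrow (i : ι) : μ.map (fun ω j ↦ X (i, j) ω) = Measure.infinitePi fun j ↦ μ.map (X (i, j)) :=
    (iIndepFun_iff_map_fun_eq_infinitePi_map fun j ↦ mX _).1 (h.precomp (Prod.mk_right_injective i))
  simp_rw [hrow]
  rw [← Measure.infinitePi_map_curry fun i j ↦ μ.map (X (i, j)),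
    ← (iIndepFun_iff_map_fun_eq_infinitePi_map mX).1 h, Measure.map_map (by fun_prop) (by fun_prop)]
  rfl

lemma measureReal_lt_add_eq_add_gt [IsProbabilityMeasure μ] {X Y : Ω → ℝ} (hX : Measurable X)
    (hY : Measurable Y) :
    μ.real {ω | X ω < Y ω} + μ.real {ω | X ω = Y ω} + μ.real {ω | Y ω < X ω} = 1 := by
  have hunion : {ω | X ω < Y ω} ∪ {ω | X ω = Y ω} = {ω | Y ω < X ω}ᶜ := by
    ext ω; simp [le_iff_lt_or_eq]
  have hdisj : Disjoint {ω | X ω < Y ω} {ω | X ω = Y ω} :=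
    Set.disjoint_left.2 fun ω hlt heq ↦ (ne_of_lt hlt) heq
  rw [← measureReal_union hdisj (measurableSet_eq_fun hX hY), hunion,
    probReal_compl_eq_one_sub (measurableSet_lt hY hX), sub_add_cancel]

lemma covariance_indicator_one [IsProbabilityMeasure μ] {A B : Set Ω} (hA : MeasurableSet A)
    (hB : MeasurableSet B) :
    cov[A.indicator 1, B.indicator 1; μ] = μ.real (A ∩ B) - μ.real A * μ.real B := by
  have hA2 : MemLp (A.indicator 1) 2 μ := memLp_indicator_const 2 hA (1 : ℝ) (by simp)
  have hB2 : MemLp (B.indicator 1) 2 μ := memLp_indicator_const 2 hB (1 : ℝ) (by simp)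
  rw [covariance_eq_sub hA2 hB2, ← Set.inter_indicator_one,
    integral_indicator_one hA, integral_indicator_one hB, integral_indicator_one (hA.inter hB)]

/-- `ENNReal.ofReal` sends negative numbers to `0`, and then the three probabilities could not
add up to `1` when `α + 2β = 1`. -/
lemma nonneg_of_measure_lt_of_measure_eq [IsProbabilityMeasure μ] {X Y : Ω → ℝ}
    (hX : Measurable X) (hY : Measurable Y) {α β : ℝ} (hβα : β = (1 - α) / 2)
    (heq : μ {ω | X ω = Y ω} = ENNReal.ofReal α) (hlt : μ {ω | X ω < Y ω} = ENNReal.ofReal β)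
    (hgt : μ {ω | Y ω < X ω} = ENNReal.ofReal β) : 0 ≤ α ∧ 0 ≤ β := by
  have htotal := measureReal_lt_add_eq_add_gt (μ := μ) hX hY
  simp only [measureReal_def, heq, hlt, hgt, ENNReal.toReal_ofReal'] at htotal
  constructor <;> by_contra! hneg
  · rw [max_eq_right hneg.le, max_eq_left (by linarith)] at htotal
    linarith
  · rw [max_eq_right hneg.le, max_eq_left (by linarith)] at htotal
    linarith

lemma measureReal_le_of_measure_lt [IsProbabilityMeasure μ] {X Y : Ω → ℝ} (hX : Measurable X)
    (hY : Measurable Y) {β : ℝ} (hβ : 0 ≤ β) (hgt : μ {ω | Y ω < X ω} = ENNReal.ofReal β) :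
    μ.real {ω | X ω ≤ Y ω} = 1 - β := by
  rw [show {ω | X ω ≤ Y ω} = {ω | Y ω < X ω}ᶜ by ext; simp,
    probReal_compl_eq_one_sub (measurableSet_lt hY hX), measureReal_def, hgt,
    ENNReal.toReal_ofReal hβ]

end ProbabilityTheory

section Hypercube

variable {ι : Type*} [DecidableEq ι]

def flipAt (s : ι → Bool) (i : ι) : ι → Bool := Function.update s i (!s i)

@[simp]
lemma flipAt_apply_self (s : ι → Bool) (i : ι) : flipAt s i i = !s i := by
  simp [flipAt]

lemma flipAt_apply_of_ne (s : ι → Bool) {i j : ι} (h : j ≠ i) : flipAt s i j = s j :=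
  Function.update_of_ne h _ _

lemma flipAt_ne_self (s : ι → Bool) (i : ι) : flipAt s i ≠ s :=
  fun h ↦ Bool.not_ne_self (s i) (by simpa using congrFun h i)

@[simp]
lemma flipAt_flipAt (s : ι → Bool) (i : ι) : flipAt (flipAt s i) i = s := by
  simp [flipAt]

lemma flipAt_injective (s : ι → Bool) : Function.Injective (flipAt s) := by
  intro i j h
  by_contra hij
  have := congrFun h i
  rw [flipAt_apply_self, flipAt_apply_of_ne s hij] at this
  exact Bool.not_ne_self _ this

lemma flipAt_left_injective (i : ι) : Function.Injective (flipAt · i) :=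
  Function.LeftInverse.injective (g := (flipAt · i)) fun s ↦ flipAt_flipAt s i

lemma flipAt_eq_iff_eq_flipAt {s t : ι → Bool} {i : ι} : flipAt s i = t ↔ s = flipAt t i := by
  constructor <;> rintro rfl <;> simp

end Hypercube

section RandomGame

variable {Ω ι : Type*} {mΩ : MeasurableSpace Ω} {μ : Measure Ω} [DecidableEq ι]
  {Z : ι × (ι → Bool) → Ω → ℝ} {α β : ℝ}

def noDeviationEvent (Z : ι × (ι → Bool) → Ω → ℝ) (s : ι → Bool) (i : ι) : Set Ω :=
  {ω | Z (i, flipAt s i) ω ≤ Z (i, s) ω}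

def nashEvent (Z : ι × (ι → Bool) → Ω → ℝ) (s : ι → Bool) : Set Ω :=
  ⋂ i, noDeviationEvent Z s i

lemma mem_nashEvent {s : ι → Bool} {ω : Ω} :
    ω ∈ nashEvent Z s ↔ ∀ i, Z (i, flipAt s i) ω ≤ Z (i, s) ω :=
  Set.mem_iInter

lemma measurableSet_nashEvent [Countable ι] (hmeas : ∀ p, Measurable (Z p)) (s : ι → Bool) :
    MeasurableSet (nashEvent Z s) :=
  .iInter fun _ ↦ measurableSet_le (hmeas _) (hmeas _)

lemma measureReal_noDeviationEvent
    (hle : ∀ p q, p ≠ q → μ.real {ω | Z p ω ≤ Z q ω} = 1 - β) (s : ι → Bool) (i : ι) :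
    μ.real (noDeviationEvent Z s i) = 1 - β :=
  hle _ _ ((Prod.mk_right_injective i).ne (flipAt_ne_self s i))

lemma measureReal_noDeviationEvent_inter_flipAt
    (htie : ∀ p q, p ≠ q → μ.real {ω | Z p ω = Z q ω} = α) (s : ι → Bool) (i : ι) :
    μ.real (noDeviationEvent Z s i ∩ noDeviationEvent Z (flipAt s i) i) = α := by
  have hevent : noDeviationEvent Z s i ∩ noDeviationEvent Z (flipAt s i) i
      = {ω | Z (i, flipAt s i) ω = Z (i, s) ω} := by
    ext ω
    simp only [noDeviationEvent, flipAt_flipAt, Set.mem_inter_iff, Set.mem_ofPred_eq,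
      le_antisymm_iff]
  rw [hevent]
  exact htie _ _ ((Prod.mk_right_injective i).ne (flipAt_ne_self s i))

lemma measureReal_noDeviationEvent_inter_of_ne (hmeas : ∀ p, Measurable (Z p))
    (hindep : iIndepFun Z μ) (hle : ∀ p q, p ≠ q → μ.real {ω | Z p ω ≤ Z q ω} = 1 - β)
    {s t : ι → Bool} {i : ι} (hts : t ≠ s) (hflip : t ≠ flipAt s i) :
    μ.real (noDeviationEvent Z s i ∩ noDeviationEvent Z t i) = (1 - β) ^ 2 := by
  have hind := hindep.indepFun_prodMk_prodMk hmeas (i, flipAt s i) (i, s) (i, flipAt t i) (i, t)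
    ((Prod.mk_right_injective i).ne ((flipAt_left_injective i).ne hts.symm))
    ((Prod.mk_right_injective i).ne hflip.symm)
    ((Prod.mk_right_injective i).ne fun h ↦ hflip (flipAt_eq_iff_eq_flipAt.2 h).symm)
    ((Prod.mk_right_injective i).ne hts.symm)
  have hS : MeasurableSet {x : ℝ × ℝ | x.1 ≤ x.2} := measurableSet_le measurable_fst measurable_snd
  calc μ.real (noDeviationEvent Z s i ∩ noDeviationEvent Z t i)
      = μ.real (noDeviationEvent Z s i) * μ.real (noDeviationEvent Z t i) := by
        simp only [measureReal_def, ← ENNReal.toReal_mul]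
        exact congrArg ENNReal.toReal (hind.measure_inter_preimage_eq_mul _ _ hS hS)
    _ = (1 - β) ^ 2 := by
        rw [measureReal_noDeviationEvent hle, measureReal_noDeviationEvent hle, sq]

variable [Fintype ι]

lemma measureReal_nashEvent_inter (hmeas : ∀ p, Measurable (Z p)) (hindep : iIndepFun Z μ)
    (s t : ι → Bool) :
    μ.real (nashEvent Z s ∩ nashEvent Z t)
      = ∏ i, μ.real (noDeviationEvent Z s i ∩ noDeviationEvent Z t i) := by
  have hsets (i : ι) : MeasurableSet
      ({x : (ι → Bool) → ℝ | x (flipAt s i) ≤ x s} ∩ {x | x (flipAt t i) ≤ x t}) :=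
    (measurableSet_le (by fun_prop) (by fun_prop)).inter
      (measurableSet_le (by fun_prop) (by fun_prop))
  rw [nashEvent, nashEvent, ← Set.iInter_inter_distrib, measureReal_def,
    (hindep.curry hmeas).meas_iInter (s := fun i ↦ noDeviationEvent Z s i ∩ noDeviationEvent Z t i)
      fun i ↦ ⟨_, hsets i, rfl⟩, ENNReal.toReal_prod]
  rfl

lemma measureReal_nashEvent (hmeas : ∀ p, Measurable (Z p)) (hindep : iIndepFun Z μ)
    (hle : ∀ p q, p ≠ q → μ.real {ω | Z p ω ≤ Z q ω} = 1 - β) (s : ι → Bool) :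
    μ.real (nashEvent Z s) = (1 - β) ^ Fintype.card ι := by
  rw [← Set.inter_self (nashEvent Z s), measureReal_nashEvent_inter hmeas hindep,
    Finset.prod_congr rfl fun i _ ↦ (congrArg μ.real (Set.inter_self _)).trans
      (measureReal_noDeviationEvent hle s i),
    Finset.prod_const, Finset.card_univ]

lemma measureReal_nashEvent_inter_flipAt (hmeas : ∀ p, Measurable (Z p)) (hindep : iIndepFun Z μ)
    (hle : ∀ p q, p ≠ q → μ.real {ω | Z p ω ≤ Z q ω} = 1 - β)
    (htie : ∀ p q, p ≠ q → μ.real {ω | Z p ω = Z q ω} = α)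
    (s : ι → Bool) (j : ι) :
    μ.real (nashEvent Z s ∩ nashEvent Z (flipAt s j))
      = α * (1 - β) ^ (2 * Fintype.card ι - 2) := by
  rw [measureReal_nashEvent_inter hmeas hindep, ← Finset.mul_prod_erase _ _ (Finset.mem_univ j),
    measureReal_noDeviationEvent_inter_flipAt htie,
    Finset.prod_congr rfl fun i hi ↦ measureReal_noDeviationEvent_inter_of_ne hmeas hindep hle
      (flipAt_ne_self s j) ((flipAt_injective s).ne (Finset.ne_of_mem_erase hi).symm),
    Finset.prod_const, Finset.card_erase_of_mem (Finset.mem_univ j), Finset.card_univ, ← pow_mul]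
  congr 2
  omega

lemma measureReal_nashEvent_inter_of_ne (hmeas : ∀ p, Measurable (Z p))
    (hindep : iIndepFun Z μ) (hle : ∀ p q, p ≠ q → μ.real {ω | Z p ω ≤ Z q ω} = 1 - β)
    {s t : ι → Bool} (hts : t ≠ s) (hflip : ∀ i, t ≠ flipAt s i) :
    μ.real (nashEvent Z s ∩ nashEvent Z t) = (1 - β) ^ (2 * Fintype.card ι) := by
  rw [measureReal_nashEvent_inter hmeas hindep,
    Finset.prod_congr rfl fun i _ ↦ measureReal_noDeviationEvent_inter_of_ne hmeas hindep hle hts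
      (hflip i), Finset.prod_const, Finset.card_univ, ← pow_mul, mul_comm]

lemma covariance_indicator_nashEvent [IsProbabilityMeasure μ]
    (hmeas : ∀ p, Measurable (Z p)) (hindep : iIndepFun Z μ)
    (hle : ∀ p q, p ≠ q → μ.real {ω | Z p ω ≤ Z q ω} = 1 - β)
    (htie : ∀ p q, p ≠ q → μ.real {ω | Z p ω = Z q ω} = α)
    (s t : ι → Bool) :
    cov[(nashEvent Z s).indicator 1, (nashEvent Z t).indicator 1; μ]
      = (if t = s then (1 - β) ^ Fintype.card ι * (1 - (1 - β) ^ Fintype.card ι) else 0)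
        + (if t ∈ Finset.univ.image (flipAt s) then
            α * (1 - β) ^ (2 * Fintype.card ι - 2) - (1 - β) ^ (2 * Fintype.card ι) else 0) := by
  rw [covariance_indicator_one (measurableSet_nashEvent hmeas s) (measurableSet_nashEvent hmeas t),
    measureReal_nashEvent hmeas hindep hle s, measureReal_nashEvent hmeas hindep hle t,
    ← pow_add, ← two_mul]
  by_cases hts : t = s
  · subst hts
    have hnot : t ∉ Finset.univ.image (flipAt t) := by simp [flipAt_ne_self]
    rw [if_pos rfl, if_neg hnot, Set.inter_self, measureReal_nashEvent hmeas hindep hle]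
    ring
  by_cases hadj : t ∈ Finset.univ.image (flipAt s)
  · obtain ⟨j, -, rfl⟩ := Finset.mem_image.1 hadj
    rw [if_neg hts, if_pos hadj, measureReal_nashEvent_inter_flipAt hmeas hindep hle htie]
    ring
  · have hflip : ∀ i, t ≠ flipAt s i := by simpa [eq_comm] using hadj
    rw [if_neg hts, if_neg hadj, measureReal_nashEvent_inter_of_ne hmeas hindep hle hts hflip]
    ring

lemma sum_covariance_indicator_nashEvent [IsProbabilityMeasure μ]
    (hmeas : ∀ p, Measurable (Z p)) (hindep : iIndepFun Z μ)
    (hle : ∀ p q, p ≠ q → μ.real {ω | Z p ω ≤ Z q ω} = 1 - β)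
    (htie : ∀ p q, p ≠ q → μ.real {ω | Z p ω = Z q ω} = α) (s : ι → Bool) :
    ∑ t, cov[(nashEvent Z s).indicator 1, (nashEvent Z t).indicator 1; μ]
      = (1 - β) ^ Fintype.card ι * (1 - (1 - β) ^ Fintype.card ι)
        + Fintype.card ι
          * (α * (1 - β) ^ (2 * Fintype.card ι - 2) - (1 - β) ^ (2 * Fintype.card ι)) := by
  simp only [covariance_indicator_nashEvent hmeas hindep hle htie, Finset.sum_add_distrib,
    Finset.sum_ite_eq', Finset.mem_univ, if_true, Finset.sum_ite_mem, Finset.univ_inter,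
    Finset.sum_const, Finset.card_image_of_injective _ (flipAt_injective s), Finset.card_univ,
    nsmul_eq_mul]

end RandomGame

theorem variance_number_PNE_general (Ω : Type*) [MeasurableSpace Ω] (μ : Measure Ω)
    [IsProbabilityMeasure μ] (N : ℕ)
    (Z : (Fin N × (Fin N → Bool)) → Ω → ℝ)
    (hmeas : ∀ p, Measurable (Z p))
    (hindep : iIndepFun Z μ)
    (α β : ℝ) (hβα : β = (1 - α) / 2)
    (hαZ : ∀ p q, p ≠ q → μ {ω | Z p ω = Z q ω} = ENNReal.ofReal α)
    (hβZ : ∀ p q, p ≠ q → μ {ω | Z p ω < Z q ω} = ENNReal.ofReal β)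
    (card𝒩 : Ω → ℕ)
    (hcard : ∀ ω, card𝒩 ω = (Finset.univ.filter
      (fun s : Fin N → Bool =>
        ∀ i : Fin N, Z (i, Function.update s i (!s i)) ω ≤ Z (i, s) ω)).card)
    (b : ℝ) (hb : b = (1 - β) ^ N * (1 - (1 - β) ^ N)) :
    variance (fun ω => (card𝒩 ω : ℝ)) μ
      = 2 ^ N * b + 2 ^ N * N * (α * (1 - β) ^ (2 * N - 2) - (1 - β) ^ (2 * N)) := by
  have hsign (p q) (hpq : p ≠ q) : 0 ≤ α ∧ 0 ≤ β :=
    nonneg_of_measure_lt_of_measure_eq (hmeas p) (hmeas q) hβα (hαZ p q hpq) (hβZ p q hpq)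
      (hβZ q p hpq.symm)
  have hle (p q) (hpq : p ≠ q) : μ.real {ω | Z p ω ≤ Z q ω} = 1 - β :=
    measureReal_le_of_measure_lt (hmeas p) (hmeas q) (hsign p q hpq).2 (hβZ q p hpq.symm)
  have htie (p q) (hpq : p ≠ q) : μ.real {ω | Z p ω = Z q ω} = α := by
    rw [measureReal_def, hαZ p q hpq, ENNReal.toReal_ofReal (hsign p q hpq).1]
  have hcount : (fun ω ↦ (card𝒩 ω : ℝ)) = fun ω ↦ ∑ s, (nashEvent Z s).indicator 1 ω := by
    classical
    funext ω
    rw [hcard, Finset.card_filter, Nat.cast_sum]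
    refine Finset.sum_congr rfl fun s _ ↦ ?_
    simp only [Set.indicator_apply, mem_nashEvent, flipAt, Pi.one_apply, Nat.cast_ite, Nat.cast_one,
      Nat.cast_zero]
  have hL2 (s : Fin N → Bool) : MemLp ((nashEvent Z s).indicator 1) 2 μ :=
    memLp_indicator_const 2 (measurableSet_nashEvent hmeas s) (1 : ℝ) (by simp)
  rw [hcount, variance_fun_sum hL2,
    Finset.sum_congr rfl fun s _ ↦ sum_covariance_indicator_nashEvent hmeas hindep hle htie s,
    Finset.sum_const, Finset.card_univ, nsmul_eq_mul, hb]
  simp only [Fintype.card_fun, Fintype.card_bool, Fintype.card_fin]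
  push_cast
  ring

/-- The variance of the number of pure Nash equilibria equals
`τ_N² = 2^N b_N + 2^N N (α(1-β)^(2N-2) − (1-β)^(2N))` where
`b_N = (1-β)^N (1 − (1-β)^N)`. -/
theorem variance_number_PNE (Ω : Type*) [MeasurableSpace Ω] (μ : Measure Ω)
    [IsProbabilityMeasure μ] (N : ℕ)
    (Z : (Fin N × (Fin N → Bool)) → Ω → ℝ)
    (hmeas : ∀ p, Measurable (Z p))
    (hindep : iIndepFun Z μ)
    (hident : ∀ p q, IdentDistrib (Z p) (Z q) μ μ)
    (α β : ℝ) (hβα : β = (1 - α) / 2)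
    (hαZ : ∀ p q, p ≠ q → μ {ω | Z p ω = Z q ω} = ENNReal.ofReal α)
    (hβZ : ∀ p q, p ≠ q → μ {ω | Z p ω < Z q ω} = ENNReal.ofReal β)
    (card𝒩 : Ω → ℕ)
    (hcard : ∀ ω, card𝒩 ω = (Finset.univ.filter
      (fun s : Fin N → Bool =>
        ∀ i : Fin N, Z (i, Function.update s i (!s i)) ω ≤ Z (i, s) ω)).card)
    (b : ℝ) (hb : b = (1 - β) ^ N * (1 - (1 - β) ^ N)) :
    variance (fun ω => (card𝒩 ω : ℝ)) μ
      = 2 ^ N * b + 2 ^ N * N * (α * (1 - β) ^ (2 * N - 2) - (1 - β) ^ (2 * N)) :=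
  variance_number_PNE_general Ω μ N Z hmeas hindep α β hβα hαZ hβZ card𝒩 hcard b hb
end

section
/- If α > 0, then the variance τ_N² of the number of pure Nash equilibria satisfies τ_N² / (1+α)^N → 1 as N → ∞; more precisely τ_N² = (1+α)^N (1 + c_N) with |c_N| → 0 geometrically fast. -/
open Filter

/-!
With `q = 1 - β = (1 + α)/2 ∈ (1/2, 1)` we have `2^N q^N = (1+α)^N`, so dividing `τ_N²` by
`(1+α)^N` leaves `1 - q^N + (α/q² - 1) N q^N`. Both correction terms decay geometrically,
since `N q^N ≤ C r^N` for any `r ∈ (q, 1)`.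
-/

/-- The closed form of `τ_N²`, written in terms of `q = 1 - β`. -/
noncomputable def nashVariance (α q : ℝ) (N : ℕ) : ℝ :=
  2 ^ N * (q ^ N * (1 - q ^ N)) + 2 ^ N * N * (α * q ^ (2 * N - 2) - q ^ (2 * N))

lemma natCast_mul_pow_two_mul_sub_two (q : ℝ) (N : ℕ) :
    (N : ℝ) * q ^ (2 * N - 2) * q ^ 2 = N * q ^ (2 * N) := by
  rcases N with _ | m
  · simp
  · rw [mul_assoc, ← pow_add, show 2 * (m + 1) - 2 + 2 = 2 * (m + 1) by omega]

lemma nashVariance_div_sub_one (α : ℝ) {q : ℝ} (hq : q ≠ 0) (N : ℕ) :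
    nashVariance α q N / (2 * q) ^ N - 1 = -q ^ N + (α / q ^ 2 - 1) * (N * q ^ N) := by
  have hshift : (N : ℝ) * q ^ (2 * N - 2) = N * q ^ (2 * N) / q ^ 2 := by
    rw [eq_div_iff (pow_ne_zero 2 hq), natCast_mul_pow_two_mul_sub_two]
  have h2q : (2 * q) ^ N ≠ 0 := pow_ne_zero _ (mul_ne_zero two_ne_zero hq)
  rw [sub_eq_iff_eq_add, div_eq_iff h2q, nashVariance, mul_pow]
  linear_combination (2 ^ N * α) * hshift

lemma exists_natCast_mul_pow_le_geometric {q : ℝ} (hq0 : 0 ≤ q) (hq1 : q < 1) :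
    ∃ C r : ℝ, q ≤ r ∧ r < 1 ∧ ∀ N : ℕ, (N : ℝ) * q ^ N ≤ C * r ^ N := by
  obtain ⟨r, hqr, hr1⟩ := exists_between hq1
  have hr0 : 0 < r := by linarith
  have hqr0 : 0 ≤ q / r := by positivity
  have hqr1 : q / r < 1 := (div_lt_one hr0).2 (by linarith)
  obtain ⟨C, hC⟩ := (tendsto_self_mul_const_pow_of_lt_one hqr0 hqr1).bddAbove_range
  refine ⟨C, r, hqr.le, hr1, fun N => ?_⟩
  calc (N : ℝ) * q ^ N = N * (q / r) ^ N * r ^ N := by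
        rw [div_pow, mul_assoc, div_mul_cancel₀ _ (pow_ne_zero _ hr0.ne')]
    _ ≤ C * r ^ N := by gcongr; exact hC ⟨N, rfl⟩

lemma tendsto_of_abs_sub_le_geometric {f : ℕ → ℝ} {a C r : ℝ} (hr0 : 0 ≤ r) (hr1 : r < 1)
    (h : ∀ N, |f N - a| ≤ C * r ^ N) : Tendsto f atTop (nhds a) := by
  rw [tendsto_iff_norm_sub_tendsto_zero]
  refine squeeze_zero_norm (fun N => by simpa only [Real.norm_eq_abs, abs_abs] using h N) ?_
  simpa using (tendsto_pow_atTop_nhds_zero_of_lt_one hr0 hr1).const_mul C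

lemma exists_abs_neg_pow_add_mul_le_geometric (K : ℝ) {q : ℝ} (hq0 : 0 ≤ q) (hq1 : q < 1) :
    ∃ C r : ℝ, 0 ≤ r ∧ r < 1 ∧ ∀ N : ℕ, |-q ^ N + K * (N * q ^ N)| ≤ C * r ^ N := by
  obtain ⟨C, r, hqr, hr1, hC⟩ := exists_natCast_mul_pow_le_geometric hq0 hq1
  refine ⟨1 + |K| * C, r, hq0.trans hqr, hr1, fun N => ?_⟩
  calc |-q ^ N + K * (N * q ^ N)|
      ≤ |-q ^ N| + |K * (N * q ^ N)| := abs_add_le _ _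
    _ = q ^ N + |K| * (N * q ^ N) := by
        rw [abs_neg, abs_mul, abs_of_nonneg (pow_nonneg hq0 N),
          abs_of_nonneg (by positivity : (0 : ℝ) ≤ N * q ^ N)]
    _ ≤ r ^ N + |K| * (C * r ^ N) :=
        add_le_add (pow_le_pow_left₀ hq0 hqr N) (mul_le_mul_of_nonneg_left (hC N) (abs_nonneg K))
    _ = (1 + |K| * C) * r ^ N := by ring

/-- If `α > 0`, the variance `τ_N²` of the number of pure Nash equilibria (given by the
formula `τ_N² = 2^N b_N + 2^N N (α(1-β)^(2N-2) − (1-β)^(2N))`) satisfies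
`τ_N² / (1+α)^N → 1`; more precisely `τ_N² = (1+α)^N (1 + c_N)` with `|c_N| → 0`
geometrically fast. -/
theorem variance_asymptotics (α β : ℝ) (hα0 : 0 < α) (hα1 : α < 1)
    (hβα : β = (1 - α) / 2)
    (τsq : ℕ → ℝ)
    (hτ : ∀ N : ℕ, τsq N
      = 2 ^ N * ((1 - β) ^ N * (1 - (1 - β) ^ N))
        + 2 ^ N * N * (α * (1 - β) ^ (2 * N - 2) - (1 - β) ^ (2 * N))) :
    Tendsto (fun N : ℕ => τsq N / (1 + α) ^ N) atTop (nhds 1) ∧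
      ∃ C r : ℝ, 0 ≤ r ∧ r < 1 ∧
        ∀ N : ℕ, |τsq N / (1 + α) ^ N - 1| ≤ C * r ^ N := by
  set q := 1 - β
  have h2q : 2 * q = 1 + α := by simp only [q, hβα]; ring
  have hq0 : 0 < q := by linarith
  have hc : ∀ N, τsq N / (1 + α) ^ N - 1 = -q ^ N + (α / q ^ 2 - 1) * (N * q ^ N) := by
    intro N
    rw [← h2q, hτ N, ← nashVariance_div_sub_one α hq0.ne' N, nashVariance]
  obtain ⟨C, r, hr0, hr1, hC⟩ :=
    exists_abs_neg_pow_add_mul_le_geometric (α / q ^ 2 - 1) hq0.le (by linarith)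
  have hbound : ∀ N : ℕ, |τsq N / (1 + α) ^ N - 1| ≤ C * r ^ N := fun N => hc N ▸ hC N
  exact ⟨tendsto_of_abs_sub_le_geometric hr0 hr1 hbound, C, r, hr0, hr1, hbound⟩
end

section
/- The events {all edges incident to vertex t are unoriented}, indexed by even vertices t ∈ V_even of the hypercube, are mutually independent. -/
/-!
The event `E t` only involves the payoffs `Z (i, t)` and `Z (i, t^(i))`. For distinct even
vertices these index sets are disjoint: a common index `(i, s)` would make `s` both even and a
neighbour of an even vertex, or the `i`-neighbour of two distinct vertices. Independent variables
grouped into disjoint blocks generate independent σ-algebras, which gives the product formula.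
-/

open MeasureTheory ProbabilityTheory Finset

namespace ProbabilityTheory

variable {Ω ι κ : Type*} {_mΩ : MeasurableSpace Ω} {μ : Measure Ω}
  {m : ι → MeasurableSpace Ω}

theorem iIndep.measure_biInter_of_pairwiseDisjoint (h_le : ∀ i, m i ≤ _mΩ) (h : iIndep m μ)
    {S : κ → Set ι} {J : Finset κ} (hS : (J : Set κ).PairwiseDisjoint S) {A : κ → Set Ω}
    (hA : ∀ j ∈ J, MeasurableSet[⨆ i ∈ S j, m i] (A j)) :
    μ (⋂ j ∈ J, A j) = ∏ j ∈ J, μ (A j) := by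
  classical
  induction J using Finset.induction_on with
  | empty =>
    have := h.isProbabilityMeasure
    simp
  | @insert j J hj ih =>
    have hdisj : Disjoint (S j) (⋃ k ∈ J, S k) :=
      Set.disjoint_iUnion₂_right.mpr fun k hk =>
        hS (mem_insert_self j J) (mem_insert_of_mem hk) (ne_of_mem_of_not_mem hk hj).symm
    have hmeas : MeasurableSet[⨆ i ∈ ⋃ k ∈ J, S k, m i] (⋂ k ∈ J, A k) :=
      MeasurableSet.biInter J.countable_toSet fun k hk =>
        biSup_mono (f := m) (Set.subset_biUnion_of_mem (u := S) hk) _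
          (hA k (mem_insert_of_mem hk))
    rw [set_biInter_insert, prod_insert hj,
      (Indep_iff _ _ _).1 (indep_iSup_of_disjoint h_le h hdisj) _ _
        (hA j (mem_insert_self j J)) hmeas,
      ih (hS.subset (by simp)) fun k hk => hA k (mem_insert_of_mem hk)]

end ProbabilityTheory

namespace Hypercube

variable {α : Type*} [DecidableEq α]

theorem update_not_involutive (i : α) :
    Function.Involutive fun t : α → Bool => Function.update t i (!t i) :=
  fun t => by simp

theorem even_card_update_not_iff [Fintype α] (t : α → Bool) (i : α) :
    Even #{j | Function.update t i (!t i) j = true} ↔ ¬Even #{j | t j = true} := by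
  have hsum : #{j | Function.update t i (!t i) j = true} + #{j | t j = true}
      = 2 * ∑ j ∈ univ.erase i, (if t j = true then 1 else 0) + 1 := by
    simp only [card_filter, ← add_sum_erase univ _ (mem_univ i)]
    have hne : ∀ j ∈ univ.erase i, Function.update t i (!t i) j = t j := fun j hj =>
      Function.update_of_ne (ne_of_mem_erase hj) _ _
    rw [sum_congr rfl fun j hj => by rw [hne j hj]]
    cases t i <;> simp <;> ring
  have hodd : ¬Even (#{j | Function.update t i (!t i) j = true} + #{j | t j = true}) := by
    rw [hsum, Nat.not_even_iff_odd]
    exact odd_two_mul_add_one _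
  rw [Nat.even_add] at hodd
  tauto

/-- The indices `(i, s)` of the payoffs `Z_i^s` that the event `E t` involves. -/
def incidentPayoffs (t : α → Bool) : Set (α × (α → Bool)) :=
  {p | p.2 = t ∨ p.2 = Function.update t p.1 (!t p.1)}

theorem disjoint_incidentPayoffs [Fintype α] {t t' : α → Bool} (ht : Even #{j | t j = true})
    (ht' : Even #{j | t' j = true}) (hne : t ≠ t') :
    Disjoint (incidentPayoffs t) (incidentPayoffs t') := by
  rw [Set.disjoint_left]
  rintro ⟨i, s⟩ (h | h) (h' | h') <;> dsimp only at h h'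
  · exact hne (h.symm.trans h')
  · exact (even_card_update_not_iff t' i).1 (h' ▸ h ▸ ht) ht'
  · exact (even_card_update_not_iff t i).1 (h ▸ h' ▸ ht') ht
  · exact hne ((update_not_involutive i).injective (h.symm.trans h'))

def allTies {Ω β : Type*} (Z : α × (α → Bool) → Ω → β) (t : α → Bool) : Set Ω :=
  {ω | ∀ i, Z (i, t) ω = Z (i, Function.update t i (!t i)) ω}

theorem measurableSet_allTies {Ω β : Type*} [mβ : MeasurableSpace β] [MeasurableEq β]
    [Countable α] (Z : α × (α → Bool) → Ω → β) (t : α → Bool) :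
    MeasurableSet[⨆ p ∈ incidentPayoffs t, mβ.comap (Z p)] (allTies Z t) := by
  have hZ : ∀ p ∈ incidentPayoffs t, Measurable[⨆ p ∈ incidentPayoffs t, mβ.comap (Z p)] (Z p) :=
    fun p hp => Measurable.of_comap_le (le_biSup (fun p => mβ.comap (Z p)) hp)
  rw [allTies, Set.ofPred_forall]
  exact MeasurableSet.iInter fun i => measurableSet_eq_fun (hZ (i, t) (Or.inl rfl))
    (hZ (i, Function.update t i (!t i)) (Or.inr rfl))

end Hypercube

open Hypercube

theorem indep_allTies_even_vertices_general (Ω : Type*) [MeasurableSpace Ω] (μ : Measure Ω)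
    (N : ℕ)
    (Z : (Fin N × (Fin N → Bool)) → Ω → ℝ)
    (hmeas : ∀ p, Measurable (Z p))
    (hindep : iIndepFun Z μ)
    (E : (Fin N → Bool) → Set Ω)
    (hE : ∀ t, E t = {ω | ∀ i : Fin N, Z (i, t) ω = Z (i, Function.update t i (!t i)) ω})
    (I : Finset (Fin N → Bool))
    (hIeven : ∀ t ∈ I, Even (Finset.univ.filter (fun i => t i = true)).card) :
    μ (⋂ t ∈ I, E t) = ∏ t ∈ I, μ (E t) := by
  obtain rfl : E = allTies Z := funext hE
  exact hindep.iIndep.measure_biInter_of_pairwiseDisjoint (fun p => (hmeas p).comap_le)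
    (fun t ht t' ht' hne => disjoint_incidentPayoffs (hIeven t ht) (hIeven t' ht') hne)
    (fun t _ => measurableSet_allTies Z t)

/-- The events "all edges incident to vertex `t` are unoriented (ties)", indexed by the even
vertices of the hypercube, are mutually independent: for any finite set `I` of even vertices,
the probability of the intersection is the product of the probabilities. -/
theorem indep_allTies_even_vertices (Ω : Type*) [MeasurableSpace Ω] (μ : Measure Ω)
    [IsProbabilityMeasure μ] (N : ℕ)
    (Z : (Fin N × (Fin N → Bool)) → Ω → ℝ)
    (hmeas : ∀ p, Measurable (Z p))
    (hindep : iIndepFun Z μ)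
    (hident : ∀ p q, IdentDistrib (Z p) (Z q) μ μ)
    (E : (Fin N → Bool) → Set Ω)
    (hE : ∀ t, E t = {ω | ∀ i : Fin N, Z (i, t) ω = Z (i, Function.update t i (!t i)) ω})
    (I : Finset (Fin N → Bool))
    (hIeven : ∀ t ∈ I, Even (Finset.univ.filter (fun i => t i = true)).card) :
    μ (⋂ t ∈ I, E t) = ∏ t ∈ I, μ (E t) :=
  indep_allTies_even_vertices_general Ω μ N Z hmeas hindep E hE I hIeven
end
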